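/- arXiv:2311.08971 — 2 statements merged into one kernel-verified Lean document; each statement's English description precedes it below -/
import Mathlib

section
/- Let H be a hybrid quantum–classical Hamiltonian on Fin n × Fin m, H = (Matrix.diagonal ε ⊗ₖ 1) + (1 ⊗ₖ H_Q) + ∑ i, (γ i : ℂ) • (Matrix.stdBasisMatrix i i 1 ⊗ₖ S i), and let o : Fin n → ℝ. Then for every z : ℂ, the classical observable Matrix.diagonal o ⊗ₖ 1 commutes with the matrix exponential Matrix.exp ℂ (z • H). -/
open Matrix Kronecker

/-! Every term of the hybrid Hamiltonian has the form `D ⊗ₖ A` with `D` diagonal on the classical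
sector, and `diagonal o ⊗ₖ 1` commutes with each such term because diagonal matrices commute
and `1` commutes with everything. Commuting with `H` then passes to `exp (z • H)`. -/

theorem Commute.kronecker {R l m : Type*} [CommSemiring R] [Fintype l] [Fintype m]
    {A B : Matrix l l R} {C D : Matrix m m R} (hAB : Commute A B) (hCD : Commute C D) :
    Commute (A ⊗ₖ C) (B ⊗ₖ D) := by
  rw [Commute, SemiconjBy, ← mul_kronecker_mul, ← mul_kronecker_mul, hAB.eq, hCD.eq]

/-- The classical observable commutes with the exponential of (any complex
multiple of) the hybrid Hamiltonian. -/
theorem classical_observable_commutes_with_exp_of_hybrid_hamiltonian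
    (n m : ℕ)
    (ε γ : Fin n → ℝ)
    (H_Q : Matrix (Fin m) (Fin m) ℂ)
    (S : Fin n → Matrix (Fin m) (Fin m) ℂ)
    (H : Matrix (Fin n × Fin m) (Fin n × Fin m) ℂ)
    (hH : H = (Matrix.diagonal (fun i => (ε i : ℂ)) ⊗ₖ 1)
        + ((1 : Matrix (Fin n) (Fin n) ℂ) ⊗ₖ H_Q)
        + ∑ i : Fin n, (γ i : ℂ) • (Matrix.single i i 1 ⊗ₖ S i))
    (o : Fin n → ℝ) (z : ℂ) :
    Commute (Matrix.diagonal (fun i => (o i : ℂ)) ⊗ₖ (1 : Matrix (Fin m) (Fin m) ℂ))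
      (NormedSpace.exp (z • H)) := by
  set O : Matrix (Fin n × Fin m) (Fin n × Fin m) ℂ :=
    diagonal (fun i => (o i : ℂ)) ⊗ₖ (1 : Matrix (Fin m) (Fin m) ℂ)
  have h_energy : Commute O (diagonal (fun i => (ε i : ℂ)) ⊗ₖ 1) :=
    Commute.kronecker (commute_diagonal _ _) (Commute.refl 1)
  have h_quantum : Commute O ((1 : Matrix (Fin n) (Fin n) ℂ) ⊗ₖ H_Q) :=
    Commute.kronecker (Commute.one_right _) (Commute.one_left _)
  have h_coupling (i : Fin n) : Commute O (single i i 1 ⊗ₖ S i) := by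
    rw [← diagonal_single]
    exact Commute.kronecker (commute_diagonal _ _) (Commute.one_left _)
  have h_H : Commute O H := by
    rw [hH]
    exact (h_energy.add_right h_quantum).add_right
      (Commute.sum_right _ _ _ fun i _ => (h_coupling i).smul_right _)
  exact (h_H.smul_right z).exp_right
end

section
/- Let H be a hybrid quantum–classical Hamiltonian on Fin n × Fin m, H = (Matrix.diagonal ε ⊗ₖ 1) + (1 ⊗ₖ H_Q) + ∑ i, (γ i : ℂ) • (Matrix.stdBasisMatrix i i 1 ⊗ₖ S i), let o : Fin n → ℝ and let O_Q be an m×m complex matrix. If the total additive observable commutes with H, i.e. Commute ((Matrix.diagonal o ⊗ₖ 1) + (1 ⊗ₖ O_Q)) H, then the local quantum observable already commutes with H: Commute (1 ⊗ₖ O_Q) H. (Corollary of Theorem 1: under a conservation law for a global additive quantity, a classical sector governed by a hybrid Hamiltonian cannot change the corresponding local quantum observable.) -/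
open Matrix Kronecker

/-
The hybrid Hamiltonian is block diagonal in the classical basis: each of its three terms is
`D ⊗ X` with `D` diagonal or the identity. Hence the classical part `diagonal o ⊗ 1` of the
total observable commutes with it, since diagonal matrices commute with one another.
Subtracting this from the conserved total observable leaves `1 ⊗ O_Q` commuting with `H`.
-/

variable {ι κ R : Type*} [Fintype ι] [Fintype κ] [CommRing R]

theorem Commute.kronecker_s6 {A A' : Matrix ι ι R} {B B' : Matrix κ κ R}
    (hA : Commute A A') (hB : Commute B B') : Commute (A ⊗ₖ B) (A' ⊗ₖ B') := by
  rw [commute_iff_eq, ← mul_kronecker_mul, ← mul_kronecker_mul, hA.eq, hB.eq]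

variable [DecidableEq ι] [DecidableEq κ]

theorem Matrix.commute_diagonal_single (d : ι → R) (i : ι) (r : R) :
    Commute (diagonal d) (single i i r) := by
  simpa only [diagonal_single] using commute_diagonal d (Pi.single i r)

def hybridHamiltonian (ε γ : ι → R) (H_Q : Matrix κ κ R) (S : ι → Matrix κ κ R) :
    Matrix (ι × κ) (ι × κ) R :=
  (diagonal ε ⊗ₖ 1) + ((1 : Matrix ι ι R) ⊗ₖ H_Q) + ∑ i, γ i • (single i i 1 ⊗ₖ S i)

theorem commute_diagonal_kronecker_one_hybridHamiltonian (o ε γ : ι → R) (H_Q : Matrix κ κ R)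
    (S : ι → Matrix κ κ R) :
    Commute (diagonal o ⊗ₖ (1 : Matrix κ κ R)) (hybridHamiltonian ε γ H_Q S) := by
  refine ((Commute.add_right ?_ ?_).add_right (Commute.sum_right _ _ _ fun i _ => ?_))
  · exact (commute_diagonal o ε).kronecker_s6 (Commute.one_left 1)
  · exact (Commute.one_right _).kronecker_s6 (Commute.one_left H_Q)
  · exact ((commute_diagonal_single o i 1).kronecker_s6 (Commute.one_left (S i))).smul_right _

/-- Corollary of Theorem 1: if the total additive observable
O_C ⊗ 1 + 1 ⊗ O_Q is conserved (commutes with the hybrid Hamiltonian), then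
the local quantum observable 1 ⊗ O_Q already commutes with it. -/
theorem quantum_observable_conserved_of_total_conserved
    (n m : ℕ)
    (ε γ : Fin n → ℝ)
    (H_Q : Matrix (Fin m) (Fin m) ℂ)
    (S : Fin n → Matrix (Fin m) (Fin m) ℂ)
    (H : Matrix (Fin n × Fin m) (Fin n × Fin m) ℂ)
    (hH : H = (Matrix.diagonal (fun i => (ε i : ℂ)) ⊗ₖ 1)
        + ((1 : Matrix (Fin n) (Fin n) ℂ) ⊗ₖ H_Q)
        + ∑ i : Fin n, (γ i : ℂ) • (Matrix.single i i 1 ⊗ₖ S i))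
    (o : Fin n → ℝ) (O_Q : Matrix (Fin m) (Fin m) ℂ)
    (hcons : Commute ((Matrix.diagonal (fun i => (o i : ℂ)) ⊗ₖ (1 : Matrix (Fin m) (Fin m) ℂ))
        + ((1 : Matrix (Fin n) (Fin n) ℂ) ⊗ₖ O_Q)) H) :
    Commute ((1 : Matrix (Fin n) (Fin n) ℂ) ⊗ₖ O_Q) H := by
  have hclass : Commute (diagonal (fun i => (o i : ℂ)) ⊗ₖ (1 : Matrix (Fin m) (Fin m) ℂ)) H :=
    hH ▸ commute_diagonal_kronecker_one_hybridHamiltonian _ (fun i => (ε i : ℂ))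
      (fun i => (γ i : ℂ)) H_Q S
  simpa only [add_sub_cancel_left] using hcons.sub_left hclass
end
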